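/- Let X be a topological space and let ι : C(X,ℝ) → C(X,ℂ) be the ring homomorphism given by postcomposition with the inclusion ℝ ↪ ℂ. Then for every maximal ideal 𝔐 of C(X,ℂ), the contraction ι⁻¹(𝔐) is a maximal ideal of C(X,ℝ), and the resulting map from the set of maximal ideals of C(X,ℂ) to the set of maximal ideals of C(X,ℝ) is a bijection. -/

import Mathlib

/-- Postcomposition with the inclusion `ℝ ↪ ℂ`, as a ring homomorphism
`C(X, ℝ) →+* C(X, ℂ)`. -/
noncomputable def iotaC (X : Type*) [TopologicalSpace X] : C(X, ℝ) →+* C(X, ℂ) :=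
  Complex.ofRealHom.compLeftContinuous X Complex.continuous_ofReal

section aux

variable {X : Type*} [TopologicalSpace X]

lemma iotaC_apply (r : C(X, ℝ)) (x : X) : iotaC X r x = (r x : ℂ) := rfl

lemma iotaC_injective : Function.Injective (iotaC X) := by
  intro f g h
  ext x
  have hx : iotaC X f x = iotaC X g x := congrFun (congrArg DFunLike.coe h) x
  rw [iotaC_apply, iotaC_apply] at hx
  exact_mod_cast hx

/-- `C(X, ℂ)` is integral over `C(X, ℝ)`. -/
lemma iotaC_isIntegral : (iotaC X).IsIntegral := by
  intro z
  set a : C(X, ℝ) := ⟨fun x => 2 * (z x).re,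
    continuous_const.mul (Complex.continuous_re.comp z.continuous)⟩ with ha
  set b : C(X, ℝ) := ⟨fun x => Complex.normSq (z x),
    Complex.continuous_normSq.comp z.continuous⟩ with hb
  refine ⟨Polynomial.X ^ 2 + (Polynomial.C (-a) * Polynomial.X + Polynomial.C b), ?_, ?_⟩
  · apply Polynomial.monic_X_pow_add
    refine lt_of_le_of_lt (Polynomial.degree_add_le _ _) ?_
    rw [max_lt_iff]
    refine ⟨lt_of_le_of_lt (Polynomial.degree_C_mul_X_le _) ?_,
      lt_of_le_of_lt Polynomial.degree_C_le ?_⟩ <;> decide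
  · rw [Polynomial.eval₂_add, Polynomial.eval₂_add, Polynomial.eval₂_mul,
      Polynomial.eval₂_pow, Polynomial.eval₂_C, Polynomial.eval₂_C, Polynomial.eval₂_X]
    ext x
    simp only [ContinuousMap.add_apply, ContinuousMap.mul_apply, ContinuousMap.pow_apply,
      iotaC_apply, ContinuousMap.zero_apply, map_neg, ContinuousMap.neg_apply, ha, hb,
      ContinuousMap.coe_mk]
    set w := z x
    have key : (w : ℂ) ^ 2 + -(((2 * w.re : ℝ) : ℂ)) * w + ((Complex.normSq w : ℝ) : ℂ)
        = w ^ 2 - (w + (starRingEnd ℂ) w) * w + w * (starRingEnd ℂ) w := by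
      rw [Complex.add_conj, Complex.mul_conj]
      push_cast
      ring
    rw [← add_assoc, key]
    ring

/-- The square root of the norm as a real-valued continuous map. -/
noncomputable def sqrtNorm (f : C(X, ℂ)) : C(X, ℝ) :=
  ⟨fun x => Real.sqrt ‖f x‖, Real.continuous_sqrt.comp f.continuous.norm⟩

lemma iotaC_sqrtNorm_pow_four (f : C(X, ℂ)) :
    (iotaC X (sqrtNorm f)) ^ 4 = f * star f := by
  ext x
  simp only [ContinuousMap.pow_apply, ContinuousMap.mul_apply, ContinuousMap.star_apply,
    iotaC_apply, sqrtNorm, ContinuousMap.coe_mk]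
  rw [show star (f x) = (starRingEnd ℂ) (f x) from congrFun Complex.star_def (f x),
    Complex.mul_conj]
  norm_cast
  rw [show (4 : ℕ) = 2 * 2 from rfl, pow_mul, Real.sq_sqrt (norm_nonneg _),
    Complex.normSq_eq_norm_sq]

/-- The "phase times sqrt of norm" factor. -/
noncomputable def kAux (f : C(X, ℂ)) : C(X, ℂ) := by
  refine ⟨fun x => if f x = 0 then 0 else f x / (Real.sqrt ‖f x‖ : ℂ), ?_⟩
  rw [continuous_iff_continuousAt]
  intro x₀
  by_cases h : f x₀ = 0
  · have : (if f x₀ = 0 then (0:ℂ) else f x₀ / (Real.sqrt ‖f x₀‖ : ℂ)) = 0 := if_pos h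
    rw [ContinuousAt, this]
    apply squeeze_zero_norm (a := fun x => Real.sqrt ‖f x‖)
    · intro x
      by_cases hx : f x = 0
      · simp [hx, Real.sqrt_nonneg]
      · rw [if_neg hx, norm_div, Complex.norm_real, Real.norm_eq_abs,
          abs_of_nonneg (Real.sqrt_nonneg _), Real.div_sqrt]
    · have hc := (Real.continuous_sqrt.comp f.continuous.norm).continuousAt (x := x₀)
      rw [ContinuousAt] at hc
      simpa [h, Function.comp_def] using hc
  · apply ContinuousAt.congr (f := fun x => f x / (Real.sqrt ‖f x‖ : ℂ))
    · apply ContinuousAt.div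
      · exact f.continuous.continuousAt
      · exact (Complex.continuous_ofReal.comp
          (Real.continuous_sqrt.comp f.continuous.norm)).continuousAt
      · simp only [ne_eq, Complex.ofReal_eq_zero]
        exact Real.sqrt_ne_zero'.mpr (norm_pos_iff.mpr h)
    · have hopen : IsOpen {x | f x ≠ 0} := isOpen_compl_iff.mpr
        (IsClosed.preimage f.continuous isClosed_singleton)
      filter_upwards [hopen.mem_nhds h] with x hx
      exact (if_neg hx).symm

lemma kAux_factor (f : C(X, ℂ)) : f = kAux f * iotaC X (sqrtNorm f) := by
  ext x
  simp only [ContinuousMap.mul_apply, kAux, ContinuousMap.coe_mk, iotaC_apply, sqrtNorm]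
  by_cases hx : f x = 0
  · simp [hx]
  · rw [if_neg hx, div_mul_cancel₀]
    simp only [ne_eq, Complex.ofReal_eq_zero]
    exact Real.sqrt_ne_zero'.mpr (norm_pos_iff.mpr hx)

lemma star_iotaC (r : C(X, ℝ)) : star (iotaC X r) = iotaC X r := by
  ext x
  simp only [ContinuousMap.star_apply, iotaC_apply]
  exact Complex.conj_ofReal _

/-- Key: for prime ideals of `C(X, ℂ)`, membership is determined by the contraction. -/
lemma mem_of_sqrtNorm_mem {M : Ideal C(X, ℂ)} (f : C(X, ℂ))
    (hr : iotaC X (sqrtNorm f) ∈ M) : f ∈ M := by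
  rw [kAux_factor f]
  exact Ideal.mul_mem_left M _ hr

lemma sqrtNorm_mem {M : Ideal C(X, ℂ)} [hM : M.IsPrime] {f : C(X, ℂ)}
    (hf : f ∈ M) : iotaC X (sqrtNorm f) ∈ M := by
  have h4 : (iotaC X (sqrtNorm f)) ^ 4 ∈ M := by
    rw [iotaC_sqrtNorm_pow_four]
    exact Ideal.mul_mem_right _ _ hf
  exact hM.mem_of_pow_mem 4 h4

end aux

/-- For every maximal ideal `𝔐` of `C(X, ℂ)`, the contraction `ι⁻¹(𝔐)` along postcomposition
with `ℝ ↪ ℂ` is a maximal ideal of `C(X, ℝ)`, and the resulting map on maximal spectra is a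
bijection. -/
theorem stmt12 (X : Type*) [TopologicalSpace X] :
    ∃ h : ∀ M : Ideal C(X, ℂ), M.IsMaximal → (M.comap (iotaC X)).IsMaximal,
      Function.Bijective (fun M : MaximalSpectrum C(X, ℂ) =>
        (⟨M.asIdeal.comap (iotaC X), h M.asIdeal M.isMaximal⟩ : MaximalSpectrum C(X, ℝ))) := by
  refine ⟨fun M hM =>
    haveI := hM
    Ideal.isMaximal_comap_of_isIntegral_of_isMaximal' (iotaC X) iotaC_isIntegral M, ?_, ?_⟩
  · -- injectivity
    rintro ⟨M₁, hM₁⟩ ⟨M₂, hM₂⟩ h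
    have hcomap : M₁.comap (iotaC X) = M₂.comap (iotaC X) := congrArg MaximalSpectrum.asIdeal h
    have key : ∀ (M M' : Ideal C(X, ℂ)), M.IsPrime →
        M.comap (iotaC X) = M'.comap (iotaC X) → M ≤ M' := by
      intro M M' hMp hc f hf
      haveI := hMp
      have h1 : iotaC X (sqrtNorm f) ∈ M := sqrtNorm_mem hf
      have h2 : sqrtNorm f ∈ M.comap (iotaC X) := h1
      rw [hc] at h2
      exact mem_of_sqrtNorm_mem f h2
    have h12 : M₁ ≤ M₂ := key M₁ M₂ hM₁.isPrime hcomap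
    have h21 : M₂ ≤ M₁ := key M₂ M₁ hM₂.isPrime hcomap.symm
    exact MaximalSpectrum.ext (le_antisymm h12 h21)
  · -- surjectivity
    rintro ⟨m, hm⟩
    letI : Algebra C(X, ℝ) C(X, ℂ) := (iotaC X).toAlgebra
    haveI : Algebra.IsIntegral C(X, ℝ) C(X, ℂ) := ⟨iotaC_isIntegral⟩
    haveI := hm
    have hker : RingHom.ker (algebraMap C(X, ℝ) C(X, ℂ)) ≤ m := by
      rw [RingHom.algebraMap_toAlgebra,
        (RingHom.injective_iff_ker_eq_bot (iotaC X)).mp iotaC_injective]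
      exact bot_le
    obtain ⟨Q, hQmax, hQ⟩ := Ideal.exists_ideal_over_maximal_of_isIntegral m hker
    rw [RingHom.algebraMap_toAlgebra] at hQ
    exact ⟨⟨Q, hQmax⟩, MaximalSpectrum.ext hQ⟩
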